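/- arXiv:2009.09616 — 3 statements merged into one kernel-verified Lean document; each statement's English description precedes it below -/
import Mathlib

section
/- Let S be a powerful set over a finite set E and let e ∈ E. Then e is a coloop of S if and only if {e} ∈ S. -/
/-!
Fix `{e} ∈ S` and `e ∉ X ⊆ E`, and let `A` and `B` be the families of those `Y ⊆ X` with
`Y ∈ S`, resp. `insert e Y ∈ S`. Counting the members of `S` below `insert e X` gives
`#A + #B = 2 ^ b`, while `#A = 2 ^ a`. By strong induction on `X`, `A` and `B` agree except
possibly at `X`, so `1 ≤ #B ≤ #A + 1` (`∅ ∈ B` since `{e} ∈ S`), and a power of two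
`2 ^ a + n` with `1 ≤ n ≤ 2 ^ a + 1` forces `n = 2 ^ a`; equal cardinalities then make `A` and
`B` agree at `X` as well. So `S` is closed under adding and removing `e`, i.e. `e` is a coloop.
Conversely, a coloop `e` gives `{e} = insert e ∅`, and `∅` belongs to every powerful family.
-/

/-- A family `S` of subsets of a finite set `E` is *powerful* if every member of `S`
is a subset of `E` and, for every `X ⊆ E`, the number of members of `S` that are
subsets of `X` is a power of 2. -/
def Powerful {α : Type*} [DecidableEq α] (E : Finset α) (S : Finset (Finset α)) : Prop :=
  (∀ Y ∈ S, Y ⊆ E) ∧ ∀ X ⊆ E, ∃ k : ℕ, (S.filter (fun Y => Y ⊆ X)).card = 2 ^ k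

/-- An element `e` of `E` is a *coloop* of `S` if there is a family `T` of subsets of
`E∖{e}` with `S = {X : X ∈ T} ∪ {X ∪ {e} : X ∈ T}`. -/
def IsColoop {α : Type*} [DecidableEq α] (E : Finset α) (S : Finset (Finset α)) (e : α) : Prop :=
  ∃ T : Finset (Finset α), (∀ Y ∈ T, Y ⊆ E.erase e) ∧ S = T ∪ T.image (insert e)

theorem Nat.eq_two_pow_of_two_pow_add_eq_two_pow {a b n : ℕ} (h : 2 ^ a + n = 2 ^ b)
    (hn : 0 < n) (hn' : n ≤ 2 ^ a + 1) : n = 2 ^ a := by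
  have hab : a < b := (pow_lt_pow_iff_right₀ one_lt_two).mp (show 2 ^ a < 2 ^ b by omega)
  have hba : b < a + 2 := by
    by_contra! hb
    have := Nat.pow_le_pow_right two_pos hb
    rw [pow_add] at this
    have := Nat.one_le_two_pow (n := a)
    omega
  obtain rfl : b = a + 1 := by omega
  rw [pow_succ] at h
  omega

namespace Finset

variable {α : Type*} [DecidableEq α]

theorem mem_iff_mem_of_erase_eq_of_card_eq {A B : Finset α} {x : α}
    (herase : A.erase x = B.erase x) (hcard : #A = #B) : x ∈ A ↔ x ∈ B := by
  have key : ∀ {A B : Finset α}, A.erase x = B.erase x → #A = #B → x ∈ A → x ∈ B := by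
    intro A B herase hcard hxA
    by_contra hxB
    have := card_erase_add_one hxA
    rw [herase, erase_eq_of_notMem hxB] at this
    omega
  exact ⟨key herase hcard, key herase.symm hcard.symm⟩

theorem card_filter_powerset_insert {e : α} {X : Finset α} (he : e ∉ X)
    (p : Finset α → Prop) [DecidablePred p] :
    #((insert e X).powerset.filter p) =
      #(X.powerset.filter p) + #(X.powerset.filter fun Y => p (insert e Y)) := by
  simp only [card_filter, sum_powerset_insert he]

theorem filter_subset_eq_filter_powerset (S : Finset (Finset α)) (X : Finset α) :
    S.filter (· ⊆ X) = X.powerset.filter (· ∈ S) := by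
  ext Y
  simp [and_comm]

end Finset

open Finset

namespace Powerful

variable {α : Type*} [DecidableEq α] {E : Finset α} {S : Finset (Finset α)}

theorem exists_card_filter_powerset (hS : Powerful E S) {X : Finset α} (hX : X ⊆ E) :
    ∃ k : ℕ, #(X.powerset.filter (· ∈ S)) = 2 ^ k := by
  simpa only [filter_subset_eq_filter_powerset] using hS.2 X hX

theorem empty_mem (hS : Powerful E S) : ∅ ∈ S := by
  obtain ⟨k, hk⟩ := hS.exists_card_filter_powerset (empty_subset E)
  obtain ⟨Y, hY⟩ := card_pos.mp (hk ▸ Nat.two_pow_pos k)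
  obtain ⟨rfl, hY⟩ : Y = ∅ ∧ Y ∈ S := by simpa using hY
  exact hY

theorem mem_iff_insert_mem {e : α} (hS : Powerful E S) (he : {e} ∈ S) {X : Finset α}
    (hXE : X ⊆ E) (heX : e ∉ X) : X ∈ S ↔ insert e X ∈ S := by
  induction X using Finset.strongInduction with
  | H X ih =>
  set A := X.powerset.filter (· ∈ S)
  set B := X.powerset.filter (insert e · ∈ S)
  have hAB : A.erase X = B.erase X := by
    simp only [A, B, ← filter_erase]
    refine filter_congr fun Y hY => ?_
    obtain ⟨hYX, hY⟩ : Y ≠ X ∧ Y ⊆ X := by simpa using hY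
    exact ih Y (ssubset_of_subset_of_ne hY hYX) (hY.trans hXE) fun h => heX (hY h)
  have hB : 0 < #B := card_pos.mpr ⟨∅, by simpa [B] using he⟩
  have hBA : #B ≤ #A + 1 := by
    have h₁ := card_le_card (erase_subset X A)
    have h₂ := pred_card_le_card_erase (s := B) (a := X)
    rw [← hAB] at h₂
    omega
  obtain ⟨a, ha⟩ := hS.exists_card_filter_powerset hXE
  obtain ⟨b, hb⟩ := hS.exists_card_filter_powerset
    (insert_subset (hS.1 _ he (mem_singleton_self e)) hXE)
  rw [card_filter_powerset_insert heX] at hb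
  rw [ha] at hb hBA
  have hcard : #B = #A := ha ▸ Nat.eq_two_pow_of_two_pow_add_eq_two_pow hb hB hBA
  simpa [A, B] using mem_iff_mem_of_erase_eq_of_card_eq hAB hcard.symm

end Powerful

theorem isColoop_iff_singleton_mem_general {α : Type*} [DecidableEq α]
    (E : Finset α) (S : Finset (Finset α)) (hS : Powerful E S) (e : α) :
    IsColoop E S e ↔ {e} ∈ S := by
  constructor
  · rintro ⟨T, -, rfl⟩
    have h₀ : ∅ ∈ T := by
      simpa [eq_comm (a := ∅)] using hS.empty_mem
    exact mem_union_right _ (mem_image.mpr ⟨∅, h₀, rfl⟩)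
  · intro he
    refine ⟨S.filter (e ∉ ·), fun Y hY => ?_, ?_⟩
    · rw [mem_filter] at hY
      exact subset_erase.mpr ⟨hS.1 Y hY.1, hY.2⟩
    · ext Y
      simp only [mem_union, mem_filter, mem_image]
      constructor
      · intro hY
        by_cases heY : e ∈ Y
        · refine Or.inr ⟨Y.erase e, ⟨?_, notMem_erase e Y⟩, insert_erase heY⟩
          rwa [hS.mem_iff_insert_mem he ((erase_subset e Y).trans (hS.1 Y hY))
            (notMem_erase e Y), insert_erase heY]
        · exact Or.inl ⟨hY, heY⟩
      · rintro (⟨hY, -⟩ | ⟨Z, ⟨hZ, heZ⟩, rfl⟩)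
        · exact hY
        · exact (hS.mem_iff_insert_mem he (hS.1 Z hZ) heZ).mp hZ

/-- An element `e` is a coloop of a powerful set `S` iff `{e} ∈ S`. -/
theorem isColoop_iff_singleton_mem {α : Type*} [DecidableEq α]
    (E : Finset α) (S : Finset (Finset α)) (hS : Powerful E S) (e : α) (he : e ∈ E) :
    IsColoop E S e ↔ {e} ∈ S :=
  isColoop_iff_singleton_mem_general E S hS e
end

section
/- Let S be a powerful set over a finite set E and let e ∈ E with {e} ∉ S. Then e is a frame of S if and only if r_S({e}) = r_S(E). (The hypothesis {e} ∉ S excludes only the degenerate case S = {∅, {e}}, where e is a coloop.) -/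
/-- An element `e` of `E` is a *frame* of `S` if there is a family `T` of subsets of
`E∖{e}` with `S = {X ∪ {e} : X ∈ T, X ≠ ∅} ∪ {∅}`. -/
def IsFrame {α : Type*} [DecidableEq α] (E : Finset α) (S : Finset (Finset α)) (e : α) : Prop :=
  ∃ T : Finset (Finset α), (∀ Y ∈ T, Y ⊆ E.erase e) ∧
    S = insert ∅ ((T.erase ∅).image (insert e))

section

open Finset

variable {α : Type*} [DecidableEq α]

theorem Powerful.empty_mem_s8 {E : Finset α} {S : Finset (Finset α)} (hS : Powerful E S) :
    ∅ ∈ S := by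
  obtain ⟨k, hk⟩ := hS.2 ∅ (empty_subset E)
  obtain ⟨Y, hY⟩ : (S.filter (· ⊆ ∅)).Nonempty := by
    rw [← card_pos, hk]; positivity
  rw [mem_filter, subset_empty] at hY
  exact hY.2 ▸ hY.1

theorem Powerful.filter_inter_ground_eq_empty {E : Finset α} {S : Finset (Finset α)}
    (hS : Powerful E S) : S.filter (fun Y => Y ∩ E = ∅) = {∅} := by
  ext Y
  rw [mem_filter, mem_singleton]
  constructor
  · rintro ⟨hY, h⟩
    rwa [inter_eq_left.2 (hS.1 Y hY)] at h
  · rintro rfl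
    exact ⟨hS.empty_mem_s8, empty_inter E⟩

theorem Finset.card_eq_one_iff_forall_eq_of_mem {β : Type*} {s : Finset β} {a : β}
    (ha : a ∈ s) : #s = 1 ↔ ∀ x ∈ s, x = a := by
  rw [card_eq_one]
  refine ⟨fun ⟨b, hb⟩ x hx => ?_, fun h => ⟨a, eq_singleton_iff_unique_mem.2 ⟨ha, h⟩⟩⟩
  rw [hb, mem_singleton] at ha hx
  rw [hx, ha]

theorem card_filter_inter_singleton_eq_empty_eq_one_iff {S : Finset (Finset α)} {e : α}
    (h0 : ∅ ∈ S) :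
    #(S.filter (fun Y => Y ∩ {e} = ∅)) = 1 ↔ ∀ Y ∈ S, Y ≠ ∅ → e ∈ Y := by
  have h0' : ∅ ∈ S.filter (fun Y => Y ∩ {e} = ∅) := mem_filter.2 ⟨h0, empty_inter _⟩
  rw [card_eq_one_iff_forall_eq_of_mem h0']
  simp only [mem_filter, ← disjoint_iff_inter_eq_empty, disjoint_singleton_right, and_imp]
  exact forall₂_congr fun Y _ => not_imp_comm

theorem IsFrame.mem_of_ne_empty {E : Finset α} {S : Finset (Finset α)} {e : α}
    (h : IsFrame E S e) {Y : Finset α} (hY : Y ∈ S) (hYne : Y ≠ ∅) : e ∈ Y := by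
  obtain ⟨T, -, rfl⟩ := h
  obtain rfl | ⟨Z, -, rfl⟩ := by simpa only [mem_insert, mem_image] using hY
  · exact absurd rfl hYne
  · exact mem_insert_self e Z

theorem isFrame_of_forall_mem {E : Finset α} {S : Finset (Finset α)} {e : α}
    (hSE : ∀ Y ∈ S, Y ⊆ E) (h0 : ∅ ∈ S) (hes : {e} ∉ S) (hmem : ∀ Y ∈ S, Y ≠ ∅ → e ∈ Y) :
    IsFrame E S e := by
  refine ⟨S.image (·.erase e), ?_, ?_⟩
  · simp only [mem_image]
    rintro _ ⟨Y, hY, rfl⟩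
    exact erase_subset_erase e (hSE Y hY)
  ext Y
  simp only [mem_insert, mem_image, mem_erase]
  constructor
  · intro hY
    obtain rfl | hYne := eq_or_ne Y ∅
    · exact Or.inl rfl
    have heY := hmem Y hY hYne
    refine Or.inr ⟨Y.erase e, ⟨?_, Y, hY, rfl⟩, insert_erase heY⟩
    rw [Ne, erase_eq_empty_iff]
    rintro (rfl | rfl)
    exacts [hYne rfl, hes hY]
  · rintro (rfl | ⟨-, ⟨hne, W, hW, rfl⟩, rfl⟩)
    · exact h0
    have hWne : W ≠ ∅ := by rintro rfl; simp at hne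
    rwa [insert_erase (hmem W hW hWne)]

theorem isFrame_iff_forall_mem {E : Finset α} {S : Finset (Finset α)} {e : α}
    (hSE : ∀ Y ∈ S, Y ⊆ E) (h0 : ∅ ∈ S) (hes : {e} ∉ S) :
    IsFrame E S e ↔ ∀ Y ∈ S, Y ≠ ∅ → e ∈ Y :=
  ⟨fun h _ => h.mem_of_ne_empty, isFrame_of_forall_mem hSE h0 hes⟩

theorem eq_iff_of_mul_two_pow_eq_two_pow {n a b : ℕ} (h : n * 2 ^ a = 2 ^ b) :
    a = b ↔ n = 1 := by
  constructor
  · rintro rfl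
    simpa using h
  · rintro rfl
    exact Nat.pow_right_injective le_rfl (by simpa using h)

end

theorem isFrame_iff_rank_singleton_eq_rank_ground_general {α : Type*} [DecidableEq α]
    (E : Finset α) (S : Finset (Finset α)) (hS : Powerful E S) (e : α)
    (hes : {e} ∉ S)
    (ke : ℕ) (hke : (S.filter (fun Y => Y ∩ ({e} : Finset α) = ∅)).card * 2 ^ ke = S.card)
    (kE : ℕ) (hkE : (S.filter (fun Y => Y ∩ E = ∅)).card * 2 ^ kE = S.card) :
    IsFrame E S e ↔ ke = kE := by
  have hcard : S.card = 2 ^ kE := by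
    rw [← hkE, hS.filter_inter_ground_eq_empty, Finset.card_singleton, one_mul]
  rw [isFrame_iff_forall_mem hS.1 hS.empty_mem_s8 hes,
    eq_iff_of_mul_two_pow_eq_two_pow (hke.trans hcard),
    card_filter_inter_singleton_eq_empty_eq_one_iff hS.empty_mem_s8]

/-- For a powerful set `S` over `E` and `e ∈ E` with `{e} ∉ S`, the element `e` is a
frame of `S` iff `r_S({e}) = r_S(E)`, where `r_S(X)` is the unique `k` with
`|{Y ∈ S : Y ∩ X = ∅}| · 2^k = |S|`. -/
theorem isFrame_iff_rank_singleton_eq_rank_ground {α : Type*} [DecidableEq α]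
    (E : Finset α) (S : Finset (Finset α)) (hS : Powerful E S) (e : α) (he : e ∈ E)
    (hes : {e} ∉ S)
    (ke : ℕ) (hke : (S.filter (fun Y => Y ∩ ({e} : Finset α) = ∅)).card * 2 ^ ke = S.card)
    (kE : ℕ) (hkE : (S.filter (fun Y => Y ∩ E = ∅)).card * 2 ^ kE = S.card) :
    IsFrame E S e ↔ ke = kE :=
  isFrame_iff_rank_singleton_eq_rank_ground_general E S hS e hes ke hke kE hkE
end

section
/- Let f be a powerful multiset over a finite set E and let e ∈ E. Define the deletion f∖e on subsets of E∖{e} by (f∖e)(X) = f(X) + f(X ∪ {e}). Then f∖e is a powerful multiset over E∖{e}, and for every X ⊆ E∖{e}, Q(f∖e)(X) = Qf(X). -/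
open Finset

/-- A *powerful multiset* over a finite set `E` is an indicator function
`f : Finset α → ℕ` with `f ∅ ≥ 1` such that, for every `X ⊆ E`, there is
`k ∈ ℕ` with `(∑_{Y ⊆ E, Y ∩ X = ∅} f Y) · 2^k = ∑_{Y ⊆ E} f Y` (this `k`
is the rank `Qf(X)`). -/
def PowerfulMultiset {α : Type*} [DecidableEq α] (E : Finset α) (f : Finset α → ℕ) : Prop :=
  1 ≤ f ∅ ∧ ∀ X ⊆ E, ∃ k : ℕ,
    (∑ Y ∈ E.powerset.filter (fun Y => Y ∩ X = ∅), f Y) * 2 ^ k = ∑ Y ∈ E.powerset, f Y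

/-!
Splitting every subset of `E` according to whether it contains `e` shows that the deletion has
the same total mass as `f`, and, for `e ∉ X`, the same mass on the subsets avoiding `X`. Hence
the defining equations of the ranks of `f∖e` and of `f` coincide, and a rank is unique because
`f ∅ ≥ 1` makes the mass avoiding `X` positive.
-/

section Deletion

variable {α : Type*} [DecidableEq α]

lemma sum_powerset_erase_add_insert {M : Type*} [AddCommMonoid M] (f : Finset α → M)
    {s : Finset α} {e : α} (he : e ∈ s) :
    ∑ Y ∈ (s.erase e).powerset, (f Y + f (insert e Y)) = ∑ Y ∈ s.powerset, f Y := by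
  conv_rhs => rw [← insert_erase he]
  rw [sum_powerset_insert (notMem_erase e s), sum_add_distrib]

lemma filter_powerset_inter_eq_empty (E X : Finset α) :
    E.powerset.filter (fun Y => Y ∩ X = ∅) = (E \ X).powerset := by
  ext Y
  simp [subset_sdiff, ← disjoint_iff_inter_eq_empty]

lemma sum_filter_powerset_erase_add_insert {M : Type*} [AddCommMonoid M] (f : Finset α → M)
    {E X : Finset α} {e : α} (he : e ∈ E) (hX : e ∉ X) :
    ∑ Y ∈ (E.erase e).powerset.filter (fun Y => Y ∩ X = ∅), (f Y + f (insert e Y)) =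
      ∑ Y ∈ E.powerset.filter (fun Y => Y ∩ X = ∅), f Y := by
  rw [filter_powerset_inter_eq_empty, filter_powerset_inter_eq_empty, erase_sdiff_comm]
  exact sum_powerset_erase_add_insert f (mem_sdiff.mpr ⟨he, hX⟩)

lemma rank_unique {E : Finset α} {f : Finset α → ℕ} (hf : 1 ≤ f ∅) (X : Finset α) {k k' : ℕ}
    (hk : (∑ Y ∈ E.powerset.filter (fun Y => Y ∩ X = ∅), f Y) * 2 ^ k = ∑ Y ∈ E.powerset, f Y)
    (hk' : (∑ Y ∈ E.powerset.filter (fun Y => Y ∩ X = ∅), f Y) * 2 ^ k' =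
      ∑ Y ∈ E.powerset, f Y) :
    k = k' := by
  have hpos : 0 < ∑ Y ∈ E.powerset.filter (fun Y => Y ∩ X = ∅), f Y :=
    Nat.lt_of_lt_of_le hf (single_le_sum (fun _ _ => Nat.zero_le _) (by simp))
  exact Nat.pow_right_injective le_rfl (Nat.eq_of_mul_eq_mul_left hpos (hk.trans hk'.symm))

end Deletion

/-- Deletion of a powerful multiset: for `e ∈ E`, the deletion `f∖e`, defined on
subsets of `E∖{e}` by `(f∖e)(X) = f(X) + f(X ∪ {e})`, is a powerful multiset over
`E∖{e}`, and its rank function satisfies `Q(f∖e)(X) = Qf(X)` for all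
`X ⊆ E∖{e}`. -/
theorem powerfulMultiset_deletion {α : Type*} [DecidableEq α]
    (E : Finset α) (f : Finset α → ℕ) (hf : PowerfulMultiset E f) (e : α) (he : e ∈ E) :
    PowerfulMultiset (E.erase e) (fun X => f X + f (insert e X)) ∧
    ∀ X ⊆ E.erase e, ∀ k k' : ℕ,
      ((∑ Y ∈ (E.erase e).powerset.filter (fun Y => Y ∩ X = ∅),
          (f Y + f (insert e Y))) * 2 ^ k =
        ∑ Y ∈ (E.erase e).powerset, (f Y + f (insert e Y))) →
      ((∑ Y ∈ E.powerset.filter (fun Y => Y ∩ X = ∅), f Y) * 2 ^ k' =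
        ∑ Y ∈ E.powerset, f Y) →
      k = k' := by
  obtain ⟨hf_empty, hf_rank⟩ := hf
  have hsums : ∀ X ⊆ E.erase e,
      ∑ Y ∈ (E.erase e).powerset.filter (fun Y => Y ∩ X = ∅), (f Y + f (insert e Y)) =
        ∑ Y ∈ E.powerset.filter (fun Y => Y ∩ X = ∅), f Y :=
    fun X hX => sum_filter_powerset_erase_add_insert f he fun h => notMem_erase e E (hX h)
  rw [sum_powerset_erase_add_insert f he]
  refine ⟨⟨hf_empty.trans (Nat.le_add_right _ _), fun X hX => ?_⟩, fun X hX k k' hk hk' => ?_⟩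
  · obtain ⟨k, hk⟩ := hf_rank X (hX.trans (erase_subset e E))
    exact ⟨k, by rw [hsums X hX, sum_powerset_erase_add_insert f he, hk]⟩
  · rw [hsums X hX] at hk
    exact rank_unique hf_empty X hk hk'
end
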